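/- Consider a billiard trajectory inside a cone with vertex at the origin, with p k and p (k+1) linearly independent for every k. Assume the last coordinate of each p k is positive, set q k := ((p k)ₙ)⁻¹ • p k, and assume there is a > 0 with ‖q k‖ ≤ a for all k. Then the sequence (q k) converges to a limit q ∈ ℝⁿ; moreover, if all q k lie in a closed set γ ⊆ ℝⁿ, then q ∈ γ. (Lemma 2.3, part 3.) -/

import Mathlib

open InnerProductGeometry RealInnerProductSpace Filter

/-!
Write `θ k = ∠(p k, p (k+1))` and `α k = ∠(v k, p k)`. Since `ν (k+1) ⟂ p (k+1)`, the reflection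
does not change the angle of the direction with `p (k+1)`, and the exterior angle theorem in the
triangle `0, p k, p (k+1)` gives `α k = θ k + α (k+1)`. Hence `∑ θ k ≤ α 0 ≤ π`. The points `q k`
lie on the affine hyperplane `xₙ = 1` inside the ball of radius `a`, where the distance of two
points is at most `a (1 + a)` times their angle; as `∠(q k, q (k+1)) = θ k`, the sequence `q` is
Cauchy.
-/

theorem summable_of_eq_add_succ {f g : ℕ → ℝ} (hg : ∀ k, 0 ≤ g k) (hf : ∀ k, 0 ≤ f k)
    (h : ∀ k, f k = g k + f (k + 1)) : Summable g := by
  refine summable_of_sum_range_le hg (c := f 0) fun m => ?_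
  have hg' : ∀ k, g k = f k - f (k + 1) := fun k => by linarith [h k]
  simp only [hg', Finset.sum_range_sub']
  linarith [hf m]

namespace InnerProductGeometry

variable {V : Type*} [NormedAddCommGroup V] [InnerProductSpace ℝ V]

theorem norm_sub_le_angle {x y : V} (hx : ‖x‖ = 1) (hy : ‖y‖ = 1) :
    ‖x - y‖ ≤ angle x y := by
  have hcos : Real.cos (angle x y) = ⟪x, y⟫ := by rw [cos_angle, hx, hy]; ring
  have hsq : ‖x - y‖ ^ 2 ≤ angle x y ^ 2 := by
    rw [norm_sub_sq_real, hx, hy]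
    nlinarith [Real.one_sub_sq_div_two_le_cos (x := angle x y)]
  exact pow_le_pow_iff_left₀ (norm_nonneg _) (angle_nonneg _ _) two_ne_zero |>.1 hsq

theorem angle_sub_two_inner_smul_left {ν x y : V} (hν : ‖ν‖ = 1) (hνy : ⟪ν, y⟫ = 0) :
    angle (x - (2 * ⟪x, ν⟫) • ν) y = angle x y := by
  have hinner : ⟪x - (2 * ⟪x, ν⟫) • ν, y⟫ = ⟪x, y⟫ := by
    rw [inner_sub_left, real_inner_smul_left, real_inner_comm, hνy]; ring
  have hnorm : ‖x - (2 * ⟪x, ν⟫) • ν‖ = ‖x‖ := by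
    refine (sq_eq_sq₀ (norm_nonneg _) (norm_nonneg _)).1 ?_
    rw [norm_sub_sq_real, norm_smul, real_inner_smul_right, hν, Real.norm_eq_abs,
      mul_pow, sq_abs]
    ring
  rw [angle, angle, hinner, hnorm]

/-- Exterior angle theorem for the triangle `0, x, y`. -/
theorem angle_sub_eq_angle_add_angle_sub {x y : V} (hxy : y ≠ x) :
    angle x (y - x) = angle x y + angle (y - x) y := by
  simpa using angle_eq_angle_add_add_angle_add x (sub_ne_zero.2 hxy)

theorem angle_eq_angle_add_angle_of_reflect {x y v w ν : V} (hxy : y ≠ x)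
    (hv : v = ‖y - x‖⁻¹ • (y - x)) (hν : ‖ν‖ = 1) (hνy : ⟪ν, y⟫ = 0)
    (hw : w = v - (2 * ⟪v, ν⟫) • ν) :
    angle v x = angle x y + angle w y := by
  have hpos : 0 < ‖y - x‖⁻¹ := inv_pos.2 (norm_pos_iff.2 (sub_ne_zero.2 hxy))
  rw [hw, angle_sub_two_inner_smul_left hν hνy, hv, angle_smul_left_of_pos _ _ hpos,
    angle_smul_left_of_pos _ _ hpos, angle_comm, angle_sub_eq_angle_add_angle_sub hxy]

theorem norm_sub_le_of_inner_eq_one {e x y : V} (he : ‖e‖ ≤ 1) (hx : ⟪e, x⟫ = 1)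
    (hy : ⟪e, y⟫ = 1) : ‖x - y‖ ≤ ‖x‖ * (1 + ‖y‖) * angle x y := by
  have hx0 : ‖x‖ ≠ 0 := by rintro h; simp [norm_eq_zero.1 h] at hx
  have hy0 : ‖y‖ ≠ 0 := by rintro h; simp [norm_eq_zero.1 h] at hy
  set u := ‖x‖⁻¹ • x
  set w := ‖y‖⁻¹ • y
  have hchord : ‖u - w‖ ≤ angle x y := by
    have := norm_sub_le_angle (x := u) (y := w) (by simp [u, norm_smul, hx0])
      (by simp [w, norm_smul, hy0])
    rwa [angle_smul_left_of_pos _ _ (by positivity), angle_smul_right_of_pos _ _ (by positivity)]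
      at this
  -- The radial part of `x - y` is controlled by the chord `u - w`, since `⟪e, u⟫ = ‖x‖⁻¹`.
  have hinv : |‖y‖⁻¹ - ‖x‖⁻¹| ≤ ‖u - w‖ := by
    have hew : ⟪e, w - u⟫ = ‖y‖⁻¹ - ‖x‖⁻¹ := by
      simp [u, w, inner_sub_right, real_inner_smul_right, hx, hy]
    calc |‖y‖⁻¹ - ‖x‖⁻¹| ≤ ‖e‖ * ‖w - u‖ := hew ▸ abs_real_inner_le_norm e (w - u)
      _ ≤ ‖u - w‖ := by rw [norm_sub_rev]; exact mul_le_of_le_one_left (norm_nonneg _) he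
  have hdecomp : x - y = ‖x‖ • (u - w) + (‖x‖ * ‖y‖ * (‖y‖⁻¹ - ‖x‖⁻¹)) • w := by
    simp only [u, w, smul_sub, smul_smul]
    rw [show ‖x‖ * ‖y‖ * (‖y‖⁻¹ - ‖x‖⁻¹) * ‖y‖⁻¹ = ‖x‖ * ‖y‖⁻¹ - 1 by field_simp,
      mul_inv_cancel₀ hx0, one_smul, sub_smul, one_smul]
    abel
  calc ‖x - y‖ ≤ ‖x‖ * ‖u - w‖ + ‖x‖ * ‖y‖ * |‖y‖⁻¹ - ‖x‖⁻¹| := by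
        rw [hdecomp]
        refine (norm_add_le _ _).trans_eq ?_
        simp only [norm_smul, norm_mul, Real.norm_eq_abs, abs_norm,
          show ‖w‖ = 1 by simp [w, norm_smul, hy0], mul_one]
    _ ≤ ‖x‖ * angle x y + ‖x‖ * ‖y‖ * angle x y := by gcongr; exact hinv.trans hchord
    _ = ‖x‖ * (1 + ‖y‖) * angle x y := by ring

theorem summable_angle_of_billiard {p ν v : ℕ → V} (hpne : ∀ k, p (k + 1) ≠ p k)
    (hν : ∀ k, ‖ν k‖ = 1) (hνp : ∀ k, ⟪ν k, p k⟫ = 0)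
    (hv : ∀ k, v k = ‖p (k + 1) - p k‖⁻¹ • (p (k + 1) - p k))
    (hrefl : ∀ k, v (k + 1) = v k - (2 * ⟪v k, ν (k + 1)⟫) • ν (k + 1)) :
    Summable fun k => angle (p k) (p (k + 1)) :=
  summable_of_eq_add_succ (f := fun k => angle (v k) (p k)) (fun _ => angle_nonneg _ _)
    (fun _ => angle_nonneg _ _) fun k =>
      angle_eq_angle_add_angle_of_reflect (hpne k) (hv k) (hν (k + 1)) (hνp (k + 1)) (hrefl k)

theorem cauchySeq_of_inner_eq_one_of_summable_angle {e : V} {x : ℕ → V} {a : ℝ} (he : ‖e‖ ≤ 1)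
    (hx : ∀ k, ⟪e, x k⟫ = 1) (hxa : ∀ k, ‖x k‖ ≤ a)
    (hθ : Summable fun k => angle (x k) (x (k + 1))) : CauchySeq x := by
  refine cauchySeq_of_dist_le_of_summable _ (fun k => ?_) (hθ.mul_left (a * (1 + a)))
  rw [dist_eq_norm]
  refine (norm_sub_le_of_inner_eq_one he (hx k) (hx (k + 1))).trans ?_
  have := angle_nonneg (x k) (x (k + 1))
  gcongr
  · exact (norm_nonneg _).trans (hxa k)
  · exact hxa k
  · exact hxa (k + 1)

end InnerProductGeometry

/-- Lemma 2.3, part 3: along a billiard trajectory inside a cone with vertex at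
the origin, the normalized points `q k` converge, and the limit lies in any
closed set containing all the `q k`. -/
theorem billiard_cone_q_converges {n : ℕ} (hn : 2 ≤ n)
    (p ν v : ℕ → EuclideanSpace ℝ (Fin n))
    (hpne : ∀ k, p (k + 1) ≠ p k)
    (hν : ∀ k, ‖ν k‖ = 1) (hνp : ∀ k, ⟪ν k, p k⟫ = 0)
    (hv : ∀ k, v k = ‖p (k + 1) - p k‖⁻¹ • (p (k + 1) - p k))
    (hrefl : ∀ k, v (k + 1) = v k - (2 * ⟪v k, ν (k + 1)⟫) • ν (k + 1))
    (hlast : ∀ k, 0 < p k ⟨n - 1, by omega⟩)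
    (q : ℕ → EuclideanSpace ℝ (Fin n))
    (hq : ∀ k, q k = (p k ⟨n - 1, by omega⟩)⁻¹ • p k)
    (a : ℝ) (hqa : ∀ k, ‖q k‖ ≤ a) :
    ∃ qlim : EuclideanSpace ℝ (Fin n), Tendsto q atTop (nhds qlim) ∧
      ∀ γ : Set (EuclideanSpace ℝ (Fin n)),
        IsClosed γ → (∀ k, q k ∈ γ) → qlim ∈ γ := by
  set i : Fin n := ⟨n - 1, by omega⟩
  have hθ : Summable fun k => angle (q k) (q (k + 1)) := by
    have hpos k : 0 < (p k i)⁻¹ := inv_pos.2 (hlast k)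
    simpa only [hq, angle_smul_left_of_pos _ _ (hpos _), angle_smul_right_of_pos _ _ (hpos _)]
      using summable_angle_of_billiard hpne hν hνp hv hrefl
  have hqi : ∀ k, ⟪EuclideanSpace.single i 1, q k⟫ = 1 := fun k => by
    rw [hq, EuclideanSpace.inner_single_left, PiLp.smul_apply]
    simp [(hlast k).ne']
  obtain ⟨qlim, hlim⟩ := cauchySeq_tendsto_of_complete
    (cauchySeq_of_inner_eq_one_of_summable_angle (by simp) hqi hqa hθ)
  exact ⟨qlim, hlim, fun γ hγ hmem => hγ.mem_of_tendsto hlim (Eventually.of_forall hmem)⟩
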